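/- For a d×d matrix M with strictly positive entries, the projective map θ ↦ Mθ/⟨Mθ, 𝟏⟩ maps the simplex Δ into its relative interior Δ̇, and is a strict contraction on Δ̇ for the Hilbert metric with contraction ratio τ(M) = (1−√r(M))/(1+√r(M)) < 1; hence it has a unique fixed point in Δ̇, to which all orbits converge. -/

import Mathlib

set_option maxHeartbeats 1000000


open Matrix Finset Filter

/-- The Hilbert projective metric on the strictly positive orthant. -/
noncomputable def hilbertDist {d : ℕ} [NeZero d] (x y : Fin d → ℝ) : ℝ :=
  Real.log ((Finset.univ.sup' Finset.univ_nonempty fun i => x i / y i) /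
    (Finset.univ.inf' Finset.univ_nonempty fun i => x i / y i))

/-- Birkhoff's cross-ratio quantity `r(M) = min_{i,j,k,l} M_{ik} M_{jl} / (M_{jk} M_{il})`. -/
noncomputable def birkhoffR {d : ℕ} [NeZero d] (M : Matrix (Fin d) (Fin d) ℝ) : ℝ :=
  Finset.univ.inf' Finset.univ_nonempty
    fun p : (Fin d × Fin d) × Fin d × Fin d =>
      M p.1.1 p.2.1 * M p.1.2 p.2.2 / (M p.1.2 p.2.1 * M p.1.1 p.2.2)

/-- The Birkhoff contraction coefficient `τ(M) = (1 − √r(M)) / (1 + √r(M))`. -/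
noncomputable def birkhoffTau {d : ℕ} [NeZero d] (M : Matrix (Fin d) (Fin d) ℝ) : ℝ :=
  (1 - Real.sqrt (birkhoffR M)) / (1 + Real.sqrt (birkhoffR M))

/-- The unit simplex in `ℝ^d`. -/
def stdSimplex' (d : ℕ) : Set (Fin d → ℝ) :=
  {θ | (∀ i, 0 ≤ θ i) ∧ ∑ i, θ i = 1}

/-- The open (relative interior of the) unit simplex. -/
def openSimplex (d : ℕ) : Set (Fin d → ℝ) :=
  {θ | (∀ i, 0 < θ i) ∧ ∑ i, θ i = 1}

/-- The projectivized action `θ ↦ Mθ / ⟨Mθ, 1⟩` of a matrix on the simplex. -/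
noncomputable def projMap {d : ℕ} (M : Matrix (Fin d) (Fin d) ℝ)
    (θ : Fin d → ℝ) : Fin d → ℝ :=
  (∑ i, (M *ᵥ θ) i)⁻¹ • (M *ᵥ θ)


/-- Key calculus inequality: `q + w ≤ (1+qw)·w^((1-q)/(1+q))`. -/
lemma calcq {q w : ℝ} (hq : 0 < q) (hq1 : q ≤ 1) (hw : 1 ≤ w) :
    q + w ≤ (1 + q * w) * w ^ ((1 - q) / (1 + q)) := by
  set τ : ℝ := (1 - q) / (1 + q) with hτ
  have hq0 : (0:ℝ) < 1 + q := by linarith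
  set g : ℝ → ℝ := fun w => τ * Real.log w + Real.log (1 + q * w) - Real.log (q + w) with hg
  have hderiv : ∀ x : ℝ, 1 ≤ x → HasDerivAt g (τ / x + q / (1 + q * x) - 1 / (q + x)) x := by
    intro x hx
    have hx0 : (0:ℝ) < x := by linarith
    have h1 : (0:ℝ) < 1 + q * x := by nlinarith
    have h2 : (0:ℝ) < q + x := by linarith
    have d1 : HasDerivAt (fun w : ℝ => τ * Real.log w) (τ / x) x := by
      simpa [div_eq_mul_inv, mul_comm] using (Real.hasDerivAt_log hx0.ne').const_mul τ
    have d2 : HasDerivAt (fun w : ℝ => Real.log (1 + q * w)) (q / (1 + q * x)) x := by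
      have base : HasDerivAt (fun w : ℝ => 1 + q * w) q x := by
        simpa using ((hasDerivAt_id x).const_mul q).const_add 1
      simpa [div_eq_mul_inv, mul_comm] using base.log h1.ne'
    have d3 : HasDerivAt (fun w : ℝ => Real.log (q + w)) (1 / (q + x)) x := by
      have base : HasDerivAt (fun w : ℝ => q + w) 1 x := by
        simpa using (hasDerivAt_id x).const_add q
      simpa [div_eq_mul_inv] using base.log h2.ne'
    exact (d1.add d2).sub d3
  have hmono : MonotoneOn g (Set.Ici (1:ℝ)) := by
    apply monotoneOn_of_deriv_nonneg (convex_Ici 1)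
    · exact fun x hx => ((hderiv x hx).continuousAt).continuousWithinAt
    · intro x hx
      rw [interior_Ici] at hx
      exact ((hderiv x (le_of_lt hx)).differentiableAt).differentiableWithinAt
    · intro x hx
      rw [interior_Ici] at hx
      have hx1 : (1:ℝ) ≤ x := le_of_lt hx
      rw [(hderiv x hx1).deriv]
      have hx0 : (0:ℝ) < x := by linarith
      have h1 : (0:ℝ) < 1 + q * x := by nlinarith
      have h2 : (0:ℝ) < q + x := by linarith
      rw [div_add_div _ _ hx0.ne' h1.ne', div_sub_div _ _ (by positivity) h2.ne']
      apply div_nonneg _ (by positivity)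
      have key : 0 ≤ (1 - q) * (1 + q * x) * (q + x) + (1 + q) * (q * x * (q + x) - x * (1 + q * x)) := by
        have hid : (1 - q) * (1 + q * x) * (q + x) + (1 + q) * (q * x * (q + x) - x * (1 + q * x))
            = (1 - q) * q * (x - 1) ^ 2 := by ring
        rw [hid]
        have : 0 ≤ 1 - q := by linarith
        positivity
      have hτx : τ * (x * (1 + q * x)) * (q + x) + x * (q * x * (q + x) - x * (1 + q * x))
          = x / (1 + q) * ((1 - q) * (1 + q * x) * (q + x) + (1 + q) * (q * x * (q + x) - x * (1 + q * x))) := by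
        rw [hτ]; field_simp
      nlinarith [mul_nonneg (div_nonneg hx0.le hq0.le) key]
  have hg1 : g 1 = 0 := by
    have : (1:ℝ) + q * 1 = q + 1 := by ring
    simp only [hg, Real.log_one, mul_zero, mul_one, this, zero_add]
    rw [add_comm q 1, sub_self]
  have hgw : 0 ≤ g w := by
    rw [← hg1]; exact hmono (by norm_num) hw (by exact hw)
  -- now exponentiate
  have hw0 : (0:ℝ) < w := by linarith
  have h1 : (0:ℝ) < 1 + q * w := by nlinarith
  have h2 : (0:ℝ) < q + w := by linarith
  have hlog : Real.log (q + w) ≤ Real.log ((1 + q * w) * w ^ τ) := by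
    rw [Real.log_mul h1.ne' (by positivity), Real.log_rpow hw0]
    simp only [hg] at hgw; linarith
  have := (Real.log_le_log_iff h2 (by positivity)).mp hlog
  linarith [this]

/-- Core scalar Birkhoff inequality. -/
lemma scalar_core {r T u v : ℝ} (hr0 : 0 < r) (hr1 : r ≤ 1) (hT : 1 ≤ T)
    (hu : 0 < u) (hv : 0 < v) (h1 : r * u ≤ v) (h2 : r * v ≤ u) :
    (1 + T * u) * (1 + v) ≤
      T ^ ((1 - Real.sqrt r) / (1 + Real.sqrt r)) * ((1 + u) * (1 + T * v)) := by
  set q : ℝ := Real.sqrt r with hqdef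
  set τ : ℝ := (1 - q) / (1 + q) with hτ
  have hq : 0 < q := Real.sqrt_pos.mpr hr0
  have hq1 : q ≤ 1 := by
    rw [hqdef, show (1:ℝ) = Real.sqrt 1 by simp]
    exact Real.sqrt_le_sqrt hr1
  have hq2 : q ^ 2 = r := Real.sq_sqrt hr0.le
  have hτ0 : 0 ≤ τ := div_nonneg (by linarith) (by linarith)
  have hT0 : (0:ℝ) < T := by linarith
  have hc1 : (1:ℝ) ≤ T ^ τ := Real.one_le_rpow hT hτ0
  have hDpos : (0:ℝ) < (1 + u) * (1 + T * v) := by positivity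
  rcases le_or_gt u v with huv | huv
  · -- easy case : ratio ≤ 1
    calc (1 + T * u) * (1 + v) ≤ (1 + u) * (1 + T * v) := by nlinarith
      _ ≤ T ^ τ * ((1 + u) * (1 + T * v)) := le_mul_of_one_le_left hDpos.le hc1
  · -- hard case
    set w : ℝ := Real.sqrt T with hwdef
    have hw : 1 ≤ w := by
      rw [hwdef, show (1:ℝ) = Real.sqrt 1 by simp]
      exact Real.sqrt_le_sqrt hT
    have hw2 : w ^ 2 = T := Real.sq_sqrt hT0.le
    have hw0 : (0:ℝ) < w := by linarith
    -- step 1 : monotone in u up to v/r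
    have step1 : (1 + T * u) * (1 + v) * (r + v) ≤ (1 + u) * ((r + T * v) * (1 + v)) := by
      nlinarith [mul_nonneg (mul_nonneg (sub_nonneg.mpr hT) (sub_nonneg.mpr h1)) (by linarith : (0:ℝ) ≤ 1 + v)]
    -- step 2 : SOS bound on the two-value ratio
    have step2 : (r + T * v) * (1 + v) * (1 + q * w) ^ 2 ≤ (q + w) ^ 2 * ((r + v) * (1 + T * v)) := by
      have hid : (q + w) ^ 2 * ((r + v) * (1 + T * v)) - (r + T * v) * (1 + v) * (1 + q * w) ^ 2
          = (1 - q ^ 2) * (w ^ 2 - 1) * (w * v - q) ^ 2 := by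
        rw [← hq2, ← hw2]; ring
      nlinarith [mul_nonneg (mul_nonneg (sub_nonneg.mpr (by nlinarith : q ^ 2 ≤ 1))
        (sub_nonneg.mpr (by nlinarith : (1:ℝ) ≤ w ^ 2))) (sq_nonneg (w * v - q))]
    -- step 3 : (q+w)^2 ≤ T^τ * (1+qw)^2
    have step3 : (q + w) ^ 2 ≤ T ^ τ * (1 + q * w) ^ 2 := by
      have h3 : q + w ≤ (1 + q * w) * w ^ τ := calcq hq hq1 hw
      have hTτ : T ^ τ = (w ^ τ) ^ 2 := by
        rw [← hw2, ← Real.rpow_natCast (w ^ τ) 2, ← Real.rpow_natCast w 2,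
          ← Real.rpow_mul hw0.le, ← Real.rpow_mul hw0.le]
        norm_num [mul_comm]
      rw [hTτ]
      calc (q + w) ^ 2 ≤ ((1 + q * w) * w ^ τ) ^ 2 := by
            apply pow_le_pow_left₀ (by positivity) h3 2
        _ = (w ^ τ) ^ 2 * (1 + q * w) ^ 2 := by ring
    -- combine
    have hrv : (0:ℝ) < r + v := by linarith
    have hqw : (0:ℝ) < (1 + q * w) ^ 2 := by positivity
    rw [← mul_le_mul_iff_of_pos_right (mul_pos hrv hqw)]
    calc (1 + T * u) * (1 + v) * ((r + v) * (1 + q * w) ^ 2)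
        = ((1 + T * u) * (1 + v) * (r + v)) * (1 + q * w) ^ 2 := by ring
      _ ≤ ((1 + u) * ((r + T * v) * (1 + v))) * (1 + q * w) ^ 2 := by
          apply mul_le_mul_of_nonneg_right step1 hqw.le
      _ = (1 + u) * ((r + T * v) * (1 + v) * (1 + q * w) ^ 2) := by ring
      _ ≤ (1 + u) * ((q + w) ^ 2 * ((r + v) * (1 + T * v))) := by
          apply mul_le_mul_of_nonneg_left step2 (by positivity)
      _ ≤ (1 + u) * ((T ^ τ * (1 + q * w) ^ 2) * ((r + v) * (1 + T * v))) := by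
          apply mul_le_mul_of_nonneg_left
            (mul_le_mul_of_nonneg_right step3 (by positivity)) (by positivity)
      _ = T ^ τ * ((1 + u) * (1 + T * v)) * ((r + v) * (1 + q * w) ^ 2) := by ring


noncomputable def rSup {d : ℕ} [NeZero d] (x y : Fin d → ℝ) : ℝ :=
  Finset.univ.sup' Finset.univ_nonempty fun i => x i / y i
noncomputable def rInf {d : ℕ} [NeZero d] (x y : Fin d → ℝ) : ℝ :=
  Finset.univ.inf' Finset.univ_nonempty fun i => x i / y i

section ratios
variable {d : ℕ} [NeZero d] {x y : Fin d → ℝ}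

lemma rInf_pos (hx : ∀ i, 0 < x i) (hy : ∀ i, 0 < y i) : 0 < rInf x y := by
  rw [rInf, Finset.lt_inf'_iff]
  exact fun i _ => div_pos (hx i) (hy i)

lemma ratio_le_rSup (i : Fin d) : x i / y i ≤ rSup x y :=
  Finset.le_sup' (fun i => x i / y i) (Finset.mem_univ i)

lemma rInf_le_ratio (i : Fin d) : rInf x y ≤ x i / y i :=
  Finset.inf'_le (fun i => x i / y i) (Finset.mem_univ i)

lemma le_rInf {a : ℝ} (h : ∀ i, a ≤ x i / y i) : a ≤ rInf x y :=
  Finset.le_inf' _ _ fun i _ => h i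

lemma rSup_le {b : ℝ} (h : ∀ i, x i / y i ≤ b) : rSup x y ≤ b :=
  Finset.sup'_le _ _ fun i _ => h i

lemma rInf_le_rSup : rInf x y ≤ rSup x y := by
  obtain ⟨i⟩ := (inferInstance : Nonempty (Fin d))
  exact le_trans (rInf_le_ratio i) (ratio_le_rSup i)

lemma rSup_pos (hx : ∀ i, 0 < x i) (hy : ∀ i, 0 < y i) : 0 < rSup x y :=
  lt_of_lt_of_le (rInf_pos hx hy) rInf_le_rSup

lemma le_rSup_mul (hy : ∀ i, 0 < y i) (i : Fin d) : x i ≤ rSup x y * y i :=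
  (div_le_iff₀ (hy i)).mp (ratio_le_rSup i)

lemma rInf_mul_le (hy : ∀ i, 0 < y i) (i : Fin d) : rInf x y * y i ≤ x i :=
  (le_div_iff₀ (hy i)).mp (rInf_le_ratio i)

lemma hilbertDist_eq : hilbertDist x y = Real.log (rSup x y / rInf x y) := rfl

lemma hilbertDist_nonneg (hx : ∀ i, 0 < x i) (hy : ∀ i, 0 < y i) : 0 ≤ hilbertDist x y :=
  Real.log_nonneg ((one_le_div (rInf_pos hx hy)).mpr rInf_le_rSup)

lemma exp_hilbertDist (hx : ∀ i, 0 < x i) (hy : ∀ i, 0 < y i) :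
    Real.exp (hilbertDist x y) = rSup x y / rInf x y :=
  Real.exp_log (div_pos (rSup_pos hx hy) (rInf_pos hx hy))

end ratios

section triangle
variable {d : ℕ} [NeZero d] {x y z : Fin d → ℝ}

lemma hilbertDist_triangle (hx : ∀ i, 0 < x i) (hy : ∀ i, 0 < y i) (hz : ∀ i, 0 < z i) :
    hilbertDist x z ≤ hilbertDist x y + hilbertDist y z := by
  have hSxy := rSup_pos hx hy
  have hSyz := rSup_pos hy hz
  have hIxy := rInf_pos hx hy
  have hIyz := rInf_pos hy hz
  have hS : rSup x z ≤ rSup x y * rSup y z := by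
    apply rSup_le
    intro i
    have h1 : x i / z i = (x i / y i) * (y i / z i) := by
      rw [div_mul_div_comm, mul_comm (y i), mul_div_mul_right _ _ (hy i).ne']
    rw [h1]
    exact mul_le_mul (ratio_le_rSup i) (ratio_le_rSup i)
      (le_of_lt (div_pos (hy i) (hz i))) hSxy.le
  have hI : rInf x y * rInf y z ≤ rInf x z := by
    apply le_rInf
    intro i
    have h1 : x i / z i = (x i / y i) * (y i / z i) := by
      rw [div_mul_div_comm, mul_comm (y i), mul_div_mul_right _ _ (hy i).ne']
    rw [h1]
    exact mul_le_mul (rInf_le_ratio i) (rInf_le_ratio i) hIyz.le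
      (le_of_lt (div_pos (hx i) (hy i)))
  rw [hilbertDist_eq, hilbertDist_eq, hilbertDist_eq,
    ← Real.log_mul (by positivity) (by positivity)]
  apply Real.log_le_log (div_pos (rSup_pos hx hz) (rInf_pos hx hz))
  rw [div_mul_div_comm]
  exact div_le_div₀ (by positivity) hS (by positivity) hI

lemma hilbertDist_eq_zero_iff (hx : ∀ i, 0 < x i) (hy : ∀ i, 0 < y i)
    (hsx : ∑ i, x i = 1) (hsy : ∑ i, y i = 1) (h : hilbertDist x y ≤ 0) : x = y := by
  have hI := rInf_pos hx hy
  have hexp : rSup x y / rInf x y ≤ 1 := by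
    have := Real.exp_le_exp.mpr h
    rw [exp_hilbertDist hx hy, Real.exp_zero] at this
    exact this
  have hSI : rSup x y ≤ rInf x y := (div_le_one hI).mp hexp
  have hconst : ∀ i, x i = rInf x y * y i := by
    intro i
    have h1 := rInf_mul_le hy (x := x) i
    have h2 := le_rSup_mul hy (x := x) i
    have h3 : rSup x y * y i ≤ rInf x y * y i :=
      mul_le_mul_of_nonneg_right hSI (hy i).le
    linarith
  have hsum : ∑ i, x i = rInf x y * ∑ i, y i := by
    rw [Finset.mul_sum]; exact Finset.sum_congr rfl fun i _ => hconst i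
  rw [hsx, hsy, mul_one] at hsum
  funext i
  rw [hconst i, ← hsum, one_mul]
end triangle


/-- Push a point of the box `[I,S]^d` to a vertex without decreasing
    the linear-fractional functional `(∑ A·s)/(∑ B·s)`. -/
lemma push_to_vertex {d : ℕ} [NeZero d] (A B : Fin d → ℝ)
    (hA : ∀ k, 0 < A k) (hB : ∀ k, 0 < B k) (I S : ℝ) (hI : 0 < I) (hIS : I ≤ S) :
    ∀ E : Finset (Fin d), ∀ s : Fin d → ℝ,
      (∀ k, I ≤ s k ∧ s k ≤ S) → (∀ k, k ∉ E → s k = I ∨ s k = S) →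
      ∃ t : Fin d → ℝ, (∀ k, t k = I ∨ t k = S) ∧
        (∑ k, A k * s k) / (∑ k, B k * s k) ≤ (∑ k, A k * t k) / (∑ k, B k * t k) := by
  have hden : ∀ s : Fin d → ℝ, (∀ k, I ≤ s k ∧ s k ≤ S) → 0 < ∑ k, B k * s k := by
    intro s hs
    apply Finset.sum_pos (fun k _ => mul_pos (hB k) (lt_of_lt_of_le hI (hs k).1))
      Finset.univ_nonempty
  intro E
  induction E using Finset.induction_on with
  | empty =>
    intro s hs hext
    exact ⟨s, fun k => hext k (Finset.notMem_empty k), le_refl _⟩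
  | @insert k0 E' hk0 IH =>
    intro s hs hext
    -- sums split at k0
    have hsplit : ∀ (c : ℝ) (f : Fin d → ℝ),
        ∑ k, f k * (Function.update s k0 c) k
          = (∑ k ∈ Finset.univ.erase k0, f k * s k) + f k0 * c := by
      intro c f
      rw [← Finset.sum_erase_add _ _ (Finset.mem_univ k0), Function.update_self]
      congr 1
      apply Finset.sum_congr rfl
      intro k hk
      rw [Function.update_of_ne (Finset.mem_erase.1 hk).1]
    have hsplit0 : ∀ f : Fin d → ℝ,
        ∑ k, f k * s k = (∑ k ∈ Finset.univ.erase k0, f k * s k) + f k0 * s k0 := by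
      intro f
      rw [← Finset.sum_erase_add _ _ (Finset.mem_univ k0)]
    set P := ∑ k ∈ Finset.univ.erase k0, A k * s k with hP
    set Q := ∑ k ∈ Finset.univ.erase k0, B k * s k with hQ
    have hPpos : 0 ≤ P :=
      Finset.sum_nonneg fun k _ => mul_nonneg (hA k).le (le_trans hI.le (hs k).1)
    have hQpos : 0 ≤ Q :=
      Finset.sum_nonneg fun k _ => mul_nonneg (hB k).le (le_trans hI.le (hs k).1)
    -- choose endpoint
    rcases le_or_gt (P * B k0) (A k0 * Q) with hcase | hcase
    · -- push to S
      set s' := Function.update s k0 S with hs'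
      have hbounds' : ∀ k, I ≤ s' k ∧ s' k ≤ S := by
        intro k
        by_cases hk : k = k0
        · subst hk; rw [hs', Function.update_self]; exact ⟨hIS, le_refl _⟩
        · rw [hs', Function.update_of_ne hk]; exact hs k
      have hext' : ∀ k, k ∉ E' → s' k = I ∨ s' k = S := by
        intro k hk
        by_cases hkk : k = k0
        · subst hkk; right; rw [hs', Function.update_self]
        · rw [hs', Function.update_of_ne hkk]
          exact hext k (by simp [hkk, hk])
      obtain ⟨t, ht, hle⟩ := IH s' hbounds' hext'
      refine ⟨t, ht, le_trans ?_ hle⟩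
      rw [div_le_div_iff₀ (hden s hs) (hden s' hbounds')]
      rw [hsplit0 A, hsplit0 B, hsplit S A, hsplit S B]
      rw [← hP, ← hQ]
      nlinarith [mul_nonneg (mul_nonneg (sub_nonneg.mpr (hs k0).2)
        (sub_nonneg.mpr hcase)) (le_refl (0:ℝ)), (hs k0).2, hcase,
        mul_nonneg (sub_nonneg.mpr (hs k0).2) (sub_nonneg.mpr hcase)]
    · -- push to I
      set s' := Function.update s k0 I with hs'
      have hbounds' : ∀ k, I ≤ s' k ∧ s' k ≤ S := by
        intro k
        by_cases hk : k = k0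
        · subst hk; rw [hs', Function.update_self]; exact ⟨le_refl _, hIS⟩
        · rw [hs', Function.update_of_ne hk]; exact hs k
      have hext' : ∀ k, k ∉ E' → s' k = I ∨ s' k = S := by
        intro k hk
        by_cases hkk : k = k0
        · subst hkk; left; rw [hs', Function.update_self]
        · rw [hs', Function.update_of_ne hkk]
          exact hext k (by simp [hkk, hk])
      obtain ⟨t, ht, hle⟩ := IH s' hbounds' hext'
      refine ⟨t, ht, le_trans ?_ hle⟩
      rw [div_le_div_iff₀ (hden s hs) (hden s' hbounds')]
      rw [hsplit0 A, hsplit0 B, hsplit I A, hsplit I B]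
      rw [← hP, ← hQ]
      nlinarith [mul_nonneg (sub_nonneg.mpr (hs k0).1) (sub_nonneg.mpr hcase.le)]

section contraction
variable {d : ℕ} [NeZero d]

lemma birkhoffR_pos (M : Matrix (Fin d) (Fin d) ℝ) (hM : ∀ i j, 0 < M i j) :
    0 < birkhoffR M := by
  rw [birkhoffR, Finset.lt_inf'_iff]
  rintro ⟨⟨i, j⟩, k, l⟩ -
  exact div_pos (mul_pos (hM i k) (hM j l)) (mul_pos (hM j k) (hM i l))

lemma birkhoffR_le_one (M : Matrix (Fin d) (Fin d) ℝ) (hM : ∀ i j, 0 < M i j) :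
    birkhoffR M ≤ 1 := by
  obtain ⟨i⟩ := (inferInstance : Nonempty (Fin d))
  have h := Finset.inf'_le (s := (Finset.univ : Finset ((Fin d × Fin d) × Fin d × Fin d)))
    (fun p : (Fin d × Fin d) × Fin d × Fin d =>
      M p.1.1 p.2.1 * M p.1.2 p.2.2 / (M p.1.2 p.2.1 * M p.1.1 p.2.2))
    (Finset.mem_univ ((i, i), (i, i)))
  rw [birkhoffR]
  apply le_trans h
  simp only
  rw [div_self (mul_pos (hM i i) (hM i i)).ne']

lemma birkhoffR_key (M : Matrix (Fin d) (Fin d) ℝ) (hM : ∀ i j, 0 < M i j)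
    (i j k l : Fin d) : birkhoffR M * (M j k * M i l) ≤ M i k * M j l := by
  have h := Finset.inf'_le (s := (Finset.univ : Finset ((Fin d × Fin d) × Fin d × Fin d)))
    (fun p : (Fin d × Fin d) × Fin d × Fin d =>
      M p.1.1 p.2.1 * M p.1.2 p.2.2 / (M p.1.2 p.2.1 * M p.1.1 p.2.2))
    (Finset.mem_univ ((i, j), (k, l)))
  rw [birkhoffR]
  exact (le_div_iff₀ (mul_pos (hM j k) (hM i l))).mp h

lemma birkhoffTau_nonneg (M : Matrix (Fin d) (Fin d) ℝ) (hM : ∀ i j, 0 < M i j) :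
    0 ≤ birkhoffTau M := by
  rw [birkhoffTau]
  have h1 : Real.sqrt (birkhoffR M) ≤ 1 := by
    rw [show (1:ℝ) = Real.sqrt 1 by simp]
    exact Real.sqrt_le_sqrt (birkhoffR_le_one M hM)
  have h0 : 0 ≤ Real.sqrt (birkhoffR M) := Real.sqrt_nonneg _
  apply div_nonneg <;> linarith

lemma mulVec_pos' (M : Matrix (Fin d) (Fin d) ℝ) (hM : ∀ i j, 0 < M i j)
    {x : Fin d → ℝ} (hx : ∀ k, 0 < x k) (i : Fin d) : 0 < (M *ᵥ x) i := by
  rw [Matrix.mulVec, dotProduct]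
  exact Finset.sum_pos (fun k _ => mul_pos (hM i k) (hx k)) Finset.univ_nonempty

lemma birkhoff_contraction (M : Matrix (Fin d) (Fin d) ℝ) (hM : ∀ i j, 0 < M i j)
    {x y : Fin d → ℝ} (hx : ∀ k, 0 < x k) (hy : ∀ k, 0 < y k) :
    hilbertDist (M *ᵥ x) (M *ᵥ y) ≤ birkhoffTau M * hilbertDist x y := by
  set r := birkhoffR M with hrdef
  have hr0 : 0 < r := birkhoffR_pos M hM
  have hr1 : r ≤ 1 := birkhoffR_le_one M hM
  set τ := birkhoffTau M with hτdef
  have hτ0 : 0 ≤ τ := birkhoffTau_nonneg M hM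
  set I := rInf x y with hIdef
  set S := rSup x y with hSdef
  have hI : 0 < I := rInf_pos hx hy
  have hIS : I ≤ S := rInf_le_rSup
  have hS : 0 < S := lt_of_lt_of_le hI hIS
  set K := S / I with hKdef
  have hK1 : (1:ℝ) ≤ K := (one_le_div hI).mpr hIS
  have hK0 : (0:ℝ) < K := by linarith
  set c := K ^ τ with hcdef
  have hc0 : (0:ℝ) < c := Real.rpow_pos_of_pos hK0 τ
  have hc1 : (1:ℝ) ≤ c := Real.one_le_rpow hK1 hτ0
  have hMx : ∀ i, 0 < (M *ᵥ x) i := mulVec_pos' M hM hx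
  have hMy : ∀ i, 0 < (M *ᵥ y) i := mulVec_pos' M hM hy
  -- the key pointwise claim
  have claim : ∀ i j, (M *ᵥ x) i * (M *ᵥ y) j ≤ c * ((M *ᵥ y) i * (M *ᵥ x) j) := by
    intro i j
    set A : Fin d → ℝ := fun k => M i k * y k with hAdef
    set B : Fin d → ℝ := fun k => M j k * y k with hBdef
    set s : Fin d → ℝ := fun k => x k / y k with hsdef
    have hA : ∀ k, 0 < A k := fun k => mul_pos (hM i k) (hy k)
    have hB : ∀ k, 0 < B k := fun k => mul_pos (hM j k) (hy k)
    have hsb : ∀ k, I ≤ s k ∧ s k ≤ S := fun k => ⟨rInf_le_ratio k, ratio_le_rSup k⟩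
    have hxA : (M *ᵥ x) i = ∑ k, A k * s k := by
      rw [Matrix.mulVec, dotProduct]
      apply Finset.sum_congr rfl
      intro k _
      rw [hAdef, hsdef]
      field_simp [(hy k).ne']
    have hyA : (M *ᵥ y) i = ∑ k, A k := rfl
    have hxB : (M *ᵥ x) j = ∑ k, B k * s k := by
      rw [Matrix.mulVec, dotProduct]
      apply Finset.sum_congr rfl
      intro k _
      rw [hBdef, hsdef]
      field_simp [(hy k).ne']
    have hyB : (M *ᵥ y) j = ∑ k, B k := rfl
    have cross : ∀ k l, r * (A l * B k) ≤ A k * B l := by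
      intro k l
      have h := birkhoffR_key M hM i j k l
      have hyy : (0:ℝ) < y k * y l := mul_pos (hy k) (hy l)
      have := mul_le_mul_of_nonneg_right h hyy.le
      calc r * (A l * B k) = r * (M j k * M i l) * (y k * y l) := by
            rw [hAdef, hBdef]; ring
        _ ≤ (M i k * M j l) * (y k * y l) := this
        _ = A k * B l := by rw [hAdef, hBdef]; ring
    -- vertex reduction
    obtain ⟨t, ht, hGle⟩ := push_to_vertex A B hA hB I S hI hIS Finset.univ s hsb
      (fun k hk => absurd (Finset.mem_univ k) hk)
    have htb : ∀ k, I ≤ t k ∧ t k ≤ S := by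
      intro k
      rcases ht k with h | h <;> rw [h] <;> exact ⟨by linarith, by linarith⟩
    have hBs : 0 < ∑ k, B k * s k :=
      Finset.sum_pos (fun k _ => mul_pos (hB k) (lt_of_lt_of_le hI (hsb k).1))
        Finset.univ_nonempty
    have hBt : 0 < ∑ k, B k * t k :=
      Finset.sum_pos (fun k _ => mul_pos (hB k) (lt_of_lt_of_le hI (htb k).1))
        Finset.univ_nonempty
    have hAs : 0 < ∑ k, A k * s k :=
      Finset.sum_pos (fun k _ => mul_pos (hA k) (lt_of_lt_of_le hI (hsb k).1))
        Finset.univ_nonempty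
    have hAsum : 0 < ∑ k, A k := Finset.sum_pos (fun k _ => hA k) Finset.univ_nonempty
    have hBsum : 0 < ∑ k, B k := Finset.sum_pos (fun k _ => hB k) Finset.univ_nonempty
    have hcross : (∑ k, A k * s k) * (∑ k, B k * t k)
        ≤ (∑ k, A k * t k) * (∑ k, B k * s k) :=
      (div_le_div_iff₀ hBs hBt).mp hGle
    -- vertex bound
    have vertex : (∑ k, A k * t k) * (∑ k, B k) ≤ c * ((∑ k, A k) * (∑ k, B k * t k)) := by
      set E := Finset.univ.filter (fun k => t k = S) with hEdef
      set a1 := ∑ k ∈ E, A k with ha1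
      set a2 := ∑ k ∈ Finset.univ.filter (fun k => ¬ t k = S), A k with ha2
      set b1 := ∑ k ∈ E, B k with hb1
      set b2 := ∑ k ∈ Finset.univ.filter (fun k => ¬ t k = S), B k with hb2
      have hsumA : ∑ k, A k = a1 + a2 := (Finset.sum_filter_add_sum_filter_not _ _ _).symm
      have hsumB : ∑ k, B k = b1 + b2 := (Finset.sum_filter_add_sum_filter_not _ _ _).symm
      have hAt : ∑ k, A k * t k = S * a1 + I * a2 := by
        rw [← Finset.sum_filter_add_sum_filter_not Finset.univ (fun k => t k = S)
          (fun k => A k * t k)]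
        congr 1
        · rw [ha1, Finset.mul_sum]
          apply Finset.sum_congr rfl
          intro k hk
          rw [(Finset.mem_filter.1 hk).2]; ring
        · rw [ha2, Finset.mul_sum]
          apply Finset.sum_congr rfl
          intro k hk
          have := (Finset.mem_filter.1 hk).2
          have htI : t k = I := (ht k).resolve_right this
          rw [htI]; ring
      have hBt' : ∑ k, B k * t k = S * b1 + I * b2 := by
        rw [← Finset.sum_filter_add_sum_filter_not Finset.univ (fun k => t k = S)
          (fun k => B k * t k)]
        congr 1
        · rw [hb1, Finset.mul_sum]
          apply Finset.sum_congr rfl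
          intro k hk
          rw [(Finset.mem_filter.1 hk).2]; ring
        · rw [hb2, Finset.mul_sum]
          apply Finset.sum_congr rfl
          intro k hk
          have := (Finset.mem_filter.1 hk).2
          have htI : t k = I := (ht k).resolve_right this
          rw [htI]; ring
      by_cases hE1 : E = ∅
      · -- all coordinates at I
        have ha10 : a1 = 0 := by rw [ha1, hE1, Finset.sum_empty]
        have hb10 : b1 = 0 := by rw [hb1, hE1, Finset.sum_empty]
        rw [hAt, hBt', hsumA, hsumB, ha10, hb10]
        have h2 : 0 ≤ I * a2 * (b2 * (c - 1)) := by
          apply mul_nonneg (mul_nonneg hI.le _) (mul_nonneg _ (by linarith))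
          · rw [ha2]; exact Finset.sum_nonneg fun k _ => (hA k).le
          · rw [hb2]; exact Finset.sum_nonneg fun k _ => (hB k).le
        nlinarith [h2]
      by_cases hE2 : Finset.univ.filter (fun k => ¬ t k = S) = ∅
      · -- all coordinates at S
        have ha20 : a2 = 0 := by rw [ha2, hE2, Finset.sum_empty]
        have hb20 : b2 = 0 := by rw [hb2, hE2, Finset.sum_empty]
        rw [hAt, hBt', hsumA, hsumB, ha20, hb20]
        have h2 : 0 ≤ S * a1 * (b1 * (c - 1)) := by
          apply mul_nonneg (mul_nonneg hS.le _) (mul_nonneg _ (by linarith))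
          · rw [ha1]; exact Finset.sum_nonneg fun k _ => (hA k).le
          · rw [hb1]; exact Finset.sum_nonneg fun k _ => (hB k).le
        nlinarith [h2]
      -- proper case
      have hEne : E.Nonempty := Finset.nonempty_of_ne_empty hE1
      have hEcne : (Finset.univ.filter (fun k => ¬ t k = S)).Nonempty :=
        Finset.nonempty_of_ne_empty hE2
      have ha1p : 0 < a1 := Finset.sum_pos (fun k _ => hA k) hEne
      have ha2p : 0 < a2 := Finset.sum_pos (fun k _ => hA k) hEcne
      have hb1p : 0 < b1 := Finset.sum_pos (fun k _ => hB k) hEne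
      have hb2p : 0 < b2 := Finset.sum_pos (fun k _ => hB k) hEcne
      -- cross sum inequalities
      have hcross1 : r * (a1 * b2) ≤ a2 * b1 := by
        have expand1 : a1 * b2 = ∑ k ∈ E, ∑ l ∈ Finset.univ.filter (fun k => ¬ t k = S),
            A k * B l := by
          rw [ha1, hb2, Finset.sum_mul_sum]
        have expand2 : a2 * b1 = ∑ k ∈ E, ∑ l ∈ Finset.univ.filter (fun k => ¬ t k = S),
            A l * B k := by
          rw [ha2, hb1, Finset.sum_mul_sum, Finset.sum_comm]
        rw [expand1, expand2, Finset.mul_sum]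
        apply Finset.sum_le_sum
        intro k _
        rw [Finset.mul_sum]
        apply Finset.sum_le_sum
        intro l _
        exact cross l k
      have hcross2 : r * (a2 * b1) ≤ a1 * b2 := by
        have expand1 : a2 * b1 = ∑ k ∈ E, ∑ l ∈ Finset.univ.filter (fun k => ¬ t k = S),
            A l * B k := by
          rw [ha2, hb1, Finset.sum_mul_sum, Finset.sum_comm]
        have expand2 : a1 * b2 = ∑ k ∈ E, ∑ l ∈ Finset.univ.filter (fun k => ¬ t k = S),
            A k * B l := by
          rw [ha1, hb2, Finset.sum_mul_sum]
        rw [expand1, expand2, Finset.mul_sum]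
        apply Finset.sum_le_sum
        intro k _
        rw [Finset.mul_sum]
        apply Finset.sum_le_sum
        intro l _
        exact cross k l
      -- apply the scalar core inequality
      set u := a1 / a2 with hu
      set v := b1 / b2 with hv
      have hup : 0 < u := div_pos ha1p ha2p
      have hvp : 0 < v := div_pos hb1p hb2p
      have hru : r * u ≤ v := by
        have e : r * u = r * a1 / a2 := by rw [hu]; ring
        rw [e, hv, div_le_div_iff₀ ha2p hb2p]
        nlinarith [hcross1]
      have hrv : r * v ≤ u := by
        have e : r * v = r * b1 / b2 := by rw [hv]; ring
        rw [e, hu, div_le_div_iff₀ hb2p ha2p]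
        nlinarith [hcross2]
      have hsc := scalar_core hr0 hr1 hK1 hup hvp hru hrv
      have hτeq : (1 - Real.sqrt r) / (1 + Real.sqrt r) = τ := by
        rw [hτdef, birkhoffTau, ← hrdef]
      rw [hτeq, ← hcdef] at hsc
      -- clear denominators
      have hKS : S = K * I := by rw [hKdef]; field_simp
      have lhs_eq : (1 + K * u) * (1 + v) * (a2 * b2) = (a2 + K * a1) * (b2 + b1) := by
        rw [hu, hv]; field_simp
      have rhs_eq : (1 + u) * (1 + K * v) * (a2 * b2) = (a2 + a1) * (b2 + K * b1) := by
        rw [hu, hv]; field_simp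
      have hsc2 : (a2 + K * a1) * (b2 + b1) ≤ c * ((a2 + a1) * (b2 + K * b1)) := by
        rw [← lhs_eq, ← rhs_eq]
        calc (1 + K * u) * (1 + v) * (a2 * b2)
            ≤ c * ((1 + u) * (1 + K * v)) * (a2 * b2) :=
              mul_le_mul_of_nonneg_right hsc (by positivity)
          _ = c * ((1 + u) * (1 + K * v) * (a2 * b2)) := by ring
        
      rw [hAt, hBt', hsumA, hsumB, hKS]
      calc (K * I * a1 + I * a2) * (b1 + b2) = I * ((a2 + K * a1) * (b2 + b1)) := by ring
        _ ≤ I * (c * ((a2 + a1) * (b2 + K * b1))) :=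
            mul_le_mul_of_nonneg_left hsc2 hI.le
        _ = c * ((a1 + a2) * (K * I * b1 + I * b2)) := by ring
    -- combine vertex reduction and vertex bound
    rw [hxA, hyA, hxB, hyB]
    apply le_of_mul_le_mul_right ?_ hBt
    calc (∑ k, A k * s k) * (∑ k, B k) * (∑ k, B k * t k)
        = ((∑ k, A k * s k) * (∑ k, B k * t k)) * (∑ k, B k) := by ring
      _ ≤ ((∑ k, A k * t k) * (∑ k, B k * s k)) * (∑ k, B k) :=
          mul_le_mul_of_nonneg_right hcross hBsum.le
      _ = ((∑ k, A k * t k) * (∑ k, B k)) * (∑ k, B k * s k) := by ring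
      _ ≤ (c * ((∑ k, A k) * (∑ k, B k * t k))) * (∑ k, B k * s k) :=
          mul_le_mul_of_nonneg_right vertex hBs.le
      _ = c * ((∑ k, A k) * (∑ k, B k * s k)) * (∑ k, B k * t k) := by ring
  -- conclude from the claim
  obtain ⟨i0, -, hi0⟩ := Finset.exists_mem_eq_sup' (Finset.univ_nonempty)
    (fun i => (M *ᵥ x) i / (M *ᵥ y) i)
  obtain ⟨j0, -, hj0⟩ := Finset.exists_mem_eq_inf' (Finset.univ_nonempty)
    (fun i => (M *ᵥ x) i / (M *ᵥ y) i)
  have hSup : rSup (M *ᵥ x) (M *ᵥ y) = (M *ᵥ x) i0 / (M *ᵥ y) i0 := hi0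
  have hInf : rInf (M *ᵥ x) (M *ᵥ y) = (M *ᵥ x) j0 / (M *ᵥ y) j0 := hj0
  have hIp := rInf_pos hMx hMy
  have hquot : rSup (M *ᵥ x) (M *ᵥ y) / rInf (M *ᵥ x) (M *ᵥ y) ≤ c := by
    rw [hSup, hInf]
    have e : (M *ᵥ x) i0 / (M *ᵥ y) i0 / ((M *ᵥ x) j0 / (M *ᵥ y) j0)
        = ((M *ᵥ x) i0 * (M *ᵥ y) j0) / ((M *ᵥ y) i0 * (M *ᵥ x) j0) := by
      field_simp
    rw [e, div_le_iff₀ (mul_pos (hMy i0) (hMx j0))]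
    linarith [claim i0 j0]
  calc hilbertDist (M *ᵥ x) (M *ᵥ y)
      = Real.log (rSup (M *ᵥ x) (M *ᵥ y) / rInf (M *ᵥ x) (M *ᵥ y)) := hilbertDist_eq
    _ ≤ Real.log c := Real.log_le_log (div_pos (rSup_pos hMx hMy) hIp) hquot
    _ = τ * Real.log K := by rw [hcdef, Real.log_rpow hK0]
    _ = τ * hilbertDist x y := by rw [hilbertDist_eq]

end contraction

section simplex
variable {d : ℕ} [NeZero d]

lemma mulVec_pos_of_simplex (M : Matrix (Fin d) (Fin d) ℝ) (hM : ∀ i j, 0 < M i j)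
    {θ : Fin d → ℝ} (hθ : θ ∈ stdSimplex' d) (i : Fin d) : 0 < (M *ᵥ θ) i := by
  obtain ⟨hpos, hsum⟩ := hθ
  have hex : ∃ k, 0 < θ k := by
    by_contra h
    push_neg at h
    have : ∑ k, θ k = 0 :=
      Finset.sum_eq_zero fun k _ => le_antisymm (h k) (hpos k)
    rw [hsum] at this; norm_num at this
  obtain ⟨k, hk⟩ := hex
  rw [Matrix.mulVec, dotProduct]
  apply Finset.sum_pos' (fun l _ => mul_nonneg (hM i l).le (hpos l))
  exact ⟨k, Finset.mem_univ k, mul_pos (hM i k) hk⟩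

lemma projMap_mem_openSimplex (M : Matrix (Fin d) (Fin d) ℝ) (hM : ∀ i j, 0 < M i j)
    {θ : Fin d → ℝ} (hθ : θ ∈ stdSimplex' d) : projMap M θ ∈ openSimplex d := by
  have hpos := mulVec_pos_of_simplex M hM hθ
  have hsum : 0 < ∑ i, (M *ᵥ θ) i := Finset.sum_pos (fun i _ => hpos i) Finset.univ_nonempty
  constructor
  · intro i
    rw [projMap]
    exact mul_pos (inv_pos.mpr hsum) (hpos i)
  · show ∑ i, ((∑ i, (M *ᵥ θ) i)⁻¹ • (M *ᵥ θ)) i = 1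
    simp only [Pi.smul_apply, smul_eq_mul]
    rw [← Finset.mul_sum, inv_mul_cancel₀ hsum.ne']

lemma rSup_smul {a b : ℝ} (ha : 0 < a) (hb : 0 < b) {v w : Fin d → ℝ} :
    rSup (a • v) (b • w) = (a / b) * rSup v w := by
  have hab : 0 ≤ a / b := (div_pos ha hb).le
  calc rSup (a • v) (b • w)
      = Finset.univ.sup' Finset.univ_nonempty (fun i => (a / b) * (v i / w i)) := by
        apply Finset.sup'_congr _ rfl
        intro i _
        simp only [Pi.smul_apply, smul_eq_mul]
        rw [mul_div_mul_comm]
    _ = (a / b) * rSup v w := by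
        rw [rSup]
        exact (Finset.comp_sup'_eq_sup'_comp _ (fun z => (a / b) * z)
          (fun x y => by show a / b * (x ⊔ y) = a / b * x ⊔ a / b * y
                         rw [mul_max_of_nonneg _ _ hab])).symm

lemma rInf_smul {a b : ℝ} (ha : 0 < a) (hb : 0 < b) {v w : Fin d → ℝ} :
    rInf (a • v) (b • w) = (a / b) * rInf v w := by
  have hab : 0 ≤ a / b := (div_pos ha hb).le
  calc rInf (a • v) (b • w)
      = Finset.univ.inf' Finset.univ_nonempty (fun i => (a / b) * (v i / w i)) := by
        apply Finset.inf'_congr _ rfl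
        intro i _
        simp only [Pi.smul_apply, smul_eq_mul]
        rw [mul_div_mul_comm]
    _ = (a / b) * rInf v w := by
        rw [rInf]
        exact (Finset.apply_inf'_eq_inf'_comp _ (fun z => (a / b) * z)
          (fun x y => by show a / b * (x ⊓ y) = a / b * x ⊓ a / b * y
                         rw [mul_min_of_nonneg _ _ hab])).symm

lemma hilbertDist_smul {a b : ℝ} (ha : 0 < a) (hb : 0 < b) {v w : Fin d → ℝ} :
    hilbertDist (a • v) (b • w) = hilbertDist v w := by
  have hab : a / b ≠ 0 := (div_pos ha hb).ne'
  rw [hilbertDist_eq, hilbertDist_eq, rSup_smul ha hb, rInf_smul ha hb,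
    mul_div_mul_left _ _ hab]

/-- Contraction property of the projective map. -/
lemma projMap_contraction (M : Matrix (Fin d) (Fin d) ℝ) (hM : ∀ i j, 0 < M i j)
    {θ θ' : Fin d → ℝ} (hθ : θ ∈ openSimplex d) (hθ' : θ' ∈ openSimplex d) :
    hilbertDist (projMap M θ) (projMap M θ') ≤ birkhoffTau M * hilbertDist θ θ' := by
  have h1 : θ ∈ stdSimplex' d := ⟨fun i => (hθ.1 i).le, hθ.2⟩
  have h2 : θ' ∈ stdSimplex' d := ⟨fun i => (hθ'.1 i).le, hθ'.2⟩
  have hs1 : 0 < ∑ i, (M *ᵥ θ) i :=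
    Finset.sum_pos (fun i _ => mulVec_pos_of_simplex M hM h1 i) Finset.univ_nonempty
  have hs2 : 0 < ∑ i, (M *ᵥ θ') i :=
    Finset.sum_pos (fun i _ => mulVec_pos_of_simplex M hM h2 i) Finset.univ_nonempty
  rw [projMap, projMap, hilbertDist_smul (inv_pos.mpr hs1) (inv_pos.mpr hs2)]
  exact birkhoff_contraction M hM hθ.1 hθ'.1

/-- coordinatewise distance bound via the Hilbert metric. -/
lemma coord_dist_le {x y : Fin d → ℝ} (hx : x ∈ openSimplex d) (hy : y ∈ openSimplex d)
    (i : Fin d) : |x i - y i| ≤ Real.exp (hilbertDist x y) - 1 := by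
  obtain ⟨hxp, hxs⟩ := hx
  obtain ⟨hyp, hys⟩ := hy
  set S := rSup x y with hS
  set I := rInf x y with hI
  have hI0 : 0 < I := rInf_pos hxp hyp
  have hS1 : 1 ≤ S := by
    have h : ∑ k, x k ≤ S * ∑ k, y k := by
      rw [Finset.mul_sum]
      exact Finset.sum_le_sum fun k _ => le_rSup_mul hyp k
    rw [hxs, hys, mul_one] at h
    exact h
  have hI1 : I ≤ 1 := by
    have h : I * ∑ k, y k ≤ ∑ k, x k := by
      rw [Finset.mul_sum]
      exact Finset.sum_le_sum fun k _ => rInf_mul_le hyp k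
    rw [hxs, hys, mul_one] at h
    exact h
  have hE : Real.exp (hilbertDist x y) = S / I := exp_hilbertDist hxp hyp
  set E := Real.exp (hilbertDist x y) with hEdef
  have hES : S ≤ E := by
    rw [hE]
    calc S = S / 1 := (div_one S).symm
      _ ≤ S / I := by
        apply div_le_div_of_nonneg_left (by linarith) hI0 hI1
  have hEI : 1 / I ≤ E := by
    rw [hE]
    gcongr
  have hyi1 : y i ≤ 1 := by
    rw [← hys]
    exact Finset.single_le_sum (fun k _ => (hyp k).le) (Finset.mem_univ i)
  have hxile : x i - y i ≤ E - 1 := by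
    have h1 : x i ≤ S * y i := le_rSup_mul hyp i
    have h2 : (S - 1) * y i ≤ (E - 1) * 1 := by
      apply mul_le_mul (by linarith) hyi1 (hyp i).le (by linarith)
    nlinarith
  have hyile : y i - x i ≤ E - 1 := by
    have h1 : I * y i ≤ x i := rInf_mul_le hyp i
    have hEI' : 2 - I ≤ E := by
      have h3 : 1 / I ≥ 2 - I := by
        rw [ge_iff_le, ← sub_nonneg]
        have : 1 / I - (2 - I) = (I - 1) ^ 2 / I := by field_simp; ring
        rw [this]
        positivity
      linarith
    have h2 : (1 - I) * y i ≤ (1 - I) * 1 := by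
      apply mul_le_mul_of_nonneg_left hyi1 (by linarith)
    nlinarith
  rw [abs_sub_le_iff]
  exact ⟨hxile, hyile⟩

end simplex

lemma exp_sub_one_le' {t : ℝ} (ht : 0 ≤ t) : Real.exp t - 1 ≤ t * Real.exp t := by
  have h := Real.add_one_le_exp (-t)
  rw [Real.exp_neg] at h
  nlinarith [mul_le_mul_of_nonneg_right h (Real.exp_pos t).le,
    inv_mul_cancel₀ (Real.exp_pos t).ne', Real.exp_pos t]

theorem projMap_strict_contraction_unique_fixed_point
    {d : ℕ} [NeZero d] (M : Matrix (Fin d) (Fin d) ℝ)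
    (hM : ∀ i j, 0 < M i j) :
    (∀ θ ∈ stdSimplex' d, projMap M θ ∈ openSimplex d) ∧
    birkhoffTau M < 1 ∧
    (∀ θ ∈ openSimplex d, ∀ θ' ∈ openSimplex d,
      hilbertDist (projMap M θ) (projMap M θ') ≤
        birkhoffTau M * hilbertDist θ θ') ∧
    ∃ θstar : Fin d → ℝ,
      (θstar ∈ openSimplex d ∧ projMap M θstar = θstar) ∧
      (∀ θ' : Fin d → ℝ, θ' ∈ openSimplex d ∧ projMap M θ' = θ' → θ' = θstar) ∧
      ∀ θ ∈ openSimplex d,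
        Tendsto (fun n => (projMap M)^[n] θ) atTop (nhds θstar) := by
  have hopen_sub : openSimplex d ⊆ stdSimplex' d := fun θ h => ⟨fun i => (h.1 i).le, h.2⟩
  set f := projMap M with hf
  set τ := birkhoffTau M with hτ
  have hτ0 : 0 ≤ τ := birkhoffTau_nonneg M hM
  have hτ1 : τ < 1 := by
    rw [hτ, birkhoffTau]
    have hq : 0 < Real.sqrt (birkhoffR M) := Real.sqrt_pos.mpr (birkhoffR_pos M hM)
    rw [div_lt_one (by linarith)]
    linarith
  have hmap : ∀ θ ∈ openSimplex d, f θ ∈ openSimplex d :=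
    fun θ h => projMap_mem_openSimplex M hM (hopen_sub h)
  have hiter_mem : ∀ θ ∈ openSimplex d, ∀ n, f^[n] θ ∈ openSimplex d := by
    intro θ h n
    induction n with
    | zero => simpa using h
    | succ n ih => rw [Function.iterate_succ_apply']; exact hmap _ ih
  have hcontr : ∀ θ ∈ openSimplex d, ∀ θ' ∈ openSimplex d,
      hilbertDist (f θ) (f θ') ≤ τ * hilbertDist θ θ' :=
    fun θ h θ' h' => projMap_contraction M hM h h'
  have hiter_contr : ∀ θ ∈ openSimplex d, ∀ θ' ∈ openSimplex d, ∀ n,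
      hilbertDist (f^[n] θ) (f^[n] θ') ≤ τ ^ n * hilbertDist θ θ' := by
    intro θ h θ' h' n
    induction n with
    | zero => simp
    | succ n ih =>
      rw [Function.iterate_succ_apply', Function.iterate_succ_apply']
      calc hilbertDist (f (f^[n] θ)) (f (f^[n] θ'))
          ≤ τ * hilbertDist (f^[n] θ) (f^[n] θ') :=
            hcontr _ (hiter_mem θ h n) _ (hiter_mem θ' h' n)
        _ ≤ τ * (τ ^ n * hilbertDist θ θ') := mul_le_mul_of_nonneg_left ih hτ0
        _ = τ ^ (n + 1) * hilbertDist θ θ' := by ring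
  have hdist_le : ∀ x ∈ openSimplex d, ∀ y ∈ openSimplex d, ∀ D : ℝ, hilbertDist x y ≤ D →
      dist x y ≤ Real.exp D - 1 := by
    intro x hx y hy D hD
    have hD0 : 0 ≤ D := le_trans (hilbertDist_nonneg hx.1 hy.1) hD
    have hE1 : (1:ℝ) ≤ Real.exp D := Real.one_le_exp hD0
    rw [dist_pi_le_iff (by linarith : (0:ℝ) ≤ Real.exp D - 1)]
    intro i
    rw [Real.dist_eq]
    calc |x i - y i| ≤ Real.exp (hilbertDist x y) - 1 := coord_dist_le hx hy i
      _ ≤ Real.exp D - 1 := by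
          have := Real.exp_le_exp.mpr hD; linarith
  have hd0 : 0 < (d:ℝ) := by exact_mod_cast Nat.pos_of_ne_zero (NeZero.ne d)
  set θ0 : Fin d → ℝ := fun _ => (d:ℝ)⁻¹ with hθ0
  have hθ0mem : θ0 ∈ openSimplex d := by
    constructor
    · intro i
      simp only [hθ0]
      positivity
    · simp only [hθ0]
      rw [Finset.sum_const, Finset.card_univ, Fintype.card_fin, nsmul_eq_mul]
      exact mul_inv_cancel₀ hd0.ne'
  set u : ℕ → (Fin d → ℝ) := fun n => f^[n] θ0 with hu
  have humem : ∀ n, u n ∈ openSimplex d := fun n => hiter_mem θ0 hθ0mem n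
  set C := hilbertDist θ0 (f θ0) with hC
  have hC0 : 0 ≤ C := hilbertDist_nonneg hθ0mem.1 (hmap θ0 hθ0mem).1
  have hstep : ∀ n, dist (u n) (u (n + 1)) ≤ (C * Real.exp C) * τ ^ n := by
    intro n
    have h1 : hilbertDist (u n) (u (n + 1)) ≤ τ ^ n * C := by
      have h := hiter_contr θ0 hθ0mem (f θ0) (hmap θ0 hθ0mem) n
      have he : u (n + 1) = f^[n] (f θ0) := by
        rw [hu]
        simp [Function.iterate_succ_apply]
      rw [he]
      exact h
    have h2 : dist (u n) (u (n + 1)) ≤ Real.exp (τ ^ n * C) - 1 :=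
      hdist_le _ (humem n) _ (humem (n + 1)) _ h1
    have h3 : Real.exp (τ ^ n * C) - 1 ≤ (τ ^ n * C) * Real.exp (τ ^ n * C) :=
      exp_sub_one_le' (by positivity)
    have hτn1 : τ ^ n ≤ 1 := pow_le_one₀ hτ0 hτ1.le
    have h4 : τ ^ n * C ≤ C := by nlinarith
    have h5 : Real.exp (τ ^ n * C) ≤ Real.exp C := Real.exp_le_exp.mpr h4
    have h6 : (τ ^ n * C) * Real.exp (τ ^ n * C) ≤ (τ ^ n * C) * Real.exp C :=
      mul_le_mul_of_nonneg_left h5 (by positivity)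
    calc dist (u n) (u (n + 1)) ≤ Real.exp (τ ^ n * C) - 1 := h2
      _ ≤ (τ ^ n * C) * Real.exp (τ ^ n * C) := h3
      _ ≤ (τ ^ n * C) * Real.exp C := h6
      _ = (C * Real.exp C) * τ ^ n := by ring
  have hcauchy : CauchySeq u := cauchySeq_of_le_geometric τ (C * Real.exp C) hτ1 hstep
  obtain ⟨θstar, hθstar_tendsto⟩ := cauchySeq_tendsto_of_complete hcauchy
  have hcoord : ∀ i, Tendsto (fun n => u n i) atTop (nhds (θstar i)) :=
    fun i => tendsto_pi_nhds.mp hθstar_tendsto i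
  have hstd : θstar ∈ stdSimplex' d := by
    constructor
    · intro i
      exact ge_of_tendsto (hcoord i) (Filter.Eventually.of_forall fun n => ((humem n).1 i).le)
    · have hsumt : Tendsto (fun n => ∑ i, u n i) atTop (nhds (∑ i, θstar i)) :=
        tendsto_finset_sum _ fun i _ => hcoord i
      have hconst : (fun n => ∑ i, u n i) = fun _ => (1:ℝ) := funext fun n => (humem n).2
      rw [hconst] at hsumt
      exact tendsto_nhds_unique hsumt tendsto_const_nhds
  have hMvcont : Continuous (fun θ : Fin d → ℝ => M *ᵥ θ) := by
    apply continuous_pi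
    intro i
    simp only [Matrix.mulVec, dotProduct]
    exact continuous_finset_sum _ fun k _ => continuous_const.mul (continuous_apply k)
  have hsumcont : Continuous (fun θ : Fin d → ℝ => ∑ i, (M *ᵥ θ) i) :=
    continuous_finset_sum _ fun i _ => (continuous_apply i).comp hMvcont
  have hfc : ContinuousAt f θstar := by
    have hs : (∑ i, (M *ᵥ θstar) i) ≠ 0 :=
      (Finset.sum_pos (fun i _ => mulVec_pos_of_simplex M hM hstd i)
        Finset.univ_nonempty).ne'
    show ContinuousAt (fun θ => (∑ i, (M *ᵥ θ) i)⁻¹ • (M *ᵥ θ)) θstar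
    exact ((hsumcont.continuousAt).inv₀ hs).smul hMvcont.continuousAt
  have hfix : f θstar = θstar := by
    have h1 : Tendsto (fun n => u (n + 1)) atTop (nhds θstar) :=
      hθstar_tendsto.comp (tendsto_add_atTop_nat 1)
    have h2 : Tendsto (fun n => f (u n)) atTop (nhds (f θstar)) :=
      hfc.tendsto.comp hθstar_tendsto
    have he : (fun n => f (u n)) = fun n => u (n + 1) := by
      funext n
      rw [hu]
      simp [Function.iterate_succ_apply']
    rw [he] at h2
    exact tendsto_nhds_unique h2 h1
  have hstarmem : θstar ∈ openSimplex d := by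
    rw [← hfix]
    exact projMap_mem_openSimplex M hM hstd
  refine ⟨fun θ h => projMap_mem_openSimplex M hM h, hτ1,
    fun θ h θ' h' => projMap_contraction M hM h h', θstar, ⟨hstarmem, hfix⟩, ?_, ?_⟩
  · rintro θ' ⟨hm, hfixθ'⟩
    have h1 : hilbertDist θ' θstar ≤ τ * hilbertDist θ' θstar := by
      conv_lhs => rw [← hfixθ', ← hfix]
      exact hcontr θ' hm θstar hstarmem
    have h2 : 0 ≤ hilbertDist θ' θstar := hilbertDist_nonneg hm.1 hstarmem.1
    have h3 : hilbertDist θ' θstar ≤ 0 := by nlinarith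
    exact hilbertDist_eq_zero_iff hm.1 hstarmem.1 hm.2 hstarmem.2 h3
  · intro θ hθmem
    have hfixiter : ∀ n : ℕ, f^[n] θstar = θstar := fun n => Function.iterate_fixed hfix n
    rw [tendsto_iff_dist_tendsto_zero]
    have hb : ∀ n, dist (f^[n] θ) θstar ≤ Real.exp (τ ^ n * hilbertDist θ θstar) - 1 := by
      intro n
      have h1 := hiter_contr θ hθmem θstar hstarmem n
      rw [hfixiter n] at h1
      exact hdist_le _ (hiter_mem θ hθmem n) _ hstarmem _ h1
    have hlim : Tendsto (fun n => Real.exp (τ ^ n * hilbertDist θ θstar) - 1)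
        atTop (nhds 0) := by
      have h1 : Tendsto (fun n : ℕ => τ ^ n * hilbertDist θ θstar) atTop (nhds 0) := by
        simpa using (tendsto_pow_atTop_nhds_zero_of_lt_one hτ0 hτ1).mul_const
          (hilbertDist θ θstar)
      have h2 := (Real.continuous_exp.tendsto 0).comp h1
      simp only [Function.comp_def, Real.exp_zero] at h2
      simpa using h2.sub_const 1
    exact squeeze_zero (fun n => dist_nonneg) hb hlim
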